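/- arXiv:2205.02039 — 2 statements merged into one kernel-verified Lean document; each statement's English description precedes it below -/
import Mathlib

section
/- For x = wε^μ in the extended affine Weyl group and any root α ∈ Φ, the number of integers k such that (α,k) is a positive affine root and x(α,k) is a negative affine root equals max(0, ℓ(x,α)). -/
open scoped BigOperators
open Classical

variable {V : Type*} [AddCommGroup V] [Module ℚ V]

/-- A (reduced, crystallographic) root system datum in a rational vector space `V`,
with positivity determined by a regular linear functional `f`. -/
structure RS (V : Type*) [AddCommGroup V] [Module ℚ V] : Type _ where
  Φ : Set V
  finite : Φ.Finite
  nonzero : ∀ α ∈ Φ, α ≠ 0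
  f : Module.Dual ℚ V
  f_ne : ∀ α ∈ Φ, f α ≠ 0
  neg_mem : ∀ α ∈ Φ, -α ∈ Φ
  coroot : V → Module.Dual ℚ V
  coroot_self : ∀ α ∈ Φ, coroot α α = 2
  reflect_mem : ∀ α ∈ Φ, ∀ β ∈ Φ, β - coroot α β • α ∈ Φ

namespace RS

variable (R : RS V)

/-- The set of positive roots. -/
def pos : Set V := {α ∈ R.Φ | 0 < R.f α}

/-- The set of negative roots. -/
def negs : Set V := {α ∈ R.Φ | R.f α < 0}

/-- The indicator function `Φ⁺` of the set of positive roots. -/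
noncomputable def ind (α : V) : ℤ := if α ∈ R.pos then 1 else 0

/-- The positive roots as a finset. -/
noncomputable def posFinset : Finset V := (Set.Finite.subset R.finite (show R.pos ⊆ R.Φ from fun α hα => hα.1)).toFinset

/-- `2ρ`, the sum of the positive roots. -/
noncomputable def twoRho : V := ∑ α ∈ R.posFinset, α

/-- The length functional `ℓ(x, α) = ⟨μ, α⟩ + Φ⁺(α) - Φ⁺(wα)` of `x = w ε^μ`. -/
noncomputable def lenF (e : V ≃ₗ[ℚ] V) (μ : Module.Dual ℚ V) (α : V) : ℚ :=
  μ α + (R.ind α : ℚ) - (R.ind (e α) : ℚ)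

end RS

/-- Length of a Weyl group element: the number of positive roots sent to negative roots. -/
noncomputable def wlen (R : RS V) {W : Type*} [Group W] (ρ : W →* (V ≃ₗ[ℚ] V)) (v : W) : ℕ :=
  {α | α ∈ R.pos ∧ ρ v α ∈ R.negs}.ncard

/-- The set of length positive elements for `x = w ε^μ`. -/
def LP (R : RS V) {W : Type*} [Group W] (ρ : W →* (V ≃ₗ[ℚ] V)) (w : W)
    (μ : Module.Dual ℚ V) : Set W :=
  {v | ∀ α ∈ R.pos, 0 ≤ R.lenF (ρ w) μ (ρ v α)}


/-- for `x = w ε^μ` and `α ∈ Φ`, the number of integers `k` such that `(α, k)` is a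
positive affine root and `x(α, k) = (wα, k - ⟨μ, α⟩)` is a negative affine root equals
`max(0, ℓ(x, α))`. -/
theorem statement6 (R : RS V) (e : V ≃ₗ[ℚ] V) (heΦ : ∀ α ∈ R.Φ, e α ∈ R.Φ)
    (μ : Module.Dual ℚ V) (hμ : ∀ α ∈ R.Φ, ∃ n : ℤ, μ α = n)
    (α : V) (hα : α ∈ R.Φ) :
    (({k : ℤ | (R.ind (-α) : ℚ) ≤ (k : ℚ) ∧ (k : ℚ) - μ α < (R.ind (-(e α)) : ℚ)}).ncard : ℚ)
      = max 0 (R.lenF e μ α) := by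
  obtain ⟨n, hn⟩ := hμ α hα
  have key : ∀ β ∈ R.Φ, R.ind (-β) = 1 - R.ind β := by
    intro β hβ
    have hfne := R.f_ne β hβ
    have hnβ := R.neg_mem β hβ
    unfold RS.ind RS.pos
    rcases lt_or_gt_of_ne hfne with h | h
    · rw [if_pos ⟨hnβ, by simpa using neg_pos.mpr h⟩, if_neg (by
        rintro ⟨-, h'⟩; exact absurd h' (not_lt.mpr h.le))]
      ring
    · rw [if_neg (by rintro ⟨-, h'⟩; simp only [map_neg] at h'; linarith),
        if_pos ⟨hβ, h⟩]
      ring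
  set a : ℤ := R.ind (-α) with ha
  set b : ℤ := n + R.ind (-(e α)) with hb
  have hset : {k : ℤ | (R.ind (-α) : ℚ) ≤ (k : ℚ) ∧ (k : ℚ) - μ α < (R.ind (-(e α)) : ℚ)}
      = Set.Ico a b := by
    ext k
    simp only [Set.mem_setOf_eq, Set.mem_Ico, hn]
    constructor
    · rintro ⟨h1, h2⟩
      exact ⟨by exact_mod_cast h1, by exact_mod_cast (by linarith : (k : ℚ) < (n : ℚ) + (R.ind (-(e α)) : ℚ))⟩
    · rintro ⟨h1, h2⟩
      have h2' : (k : ℚ) < (n : ℚ) + (R.ind (-(e α)) : ℚ) := by exact_mod_cast h2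
      exact ⟨by exact_mod_cast h1, by linarith⟩
  rw [hset]
  have hcard : (Set.Ico a b).ncard = (b - a).toNat := by
    rw [← Nat.card_coe_set_eq, Nat.card_eq_card_toFinset]
    simp [Set.toFinset_Ico, Int.card_Ico]
  rw [hcard]
  have h1 : R.ind (-α) = 1 - R.ind α := key α hα
  have h2 : R.ind (-(e α)) = 1 - R.ind (e α) := key _ (heΦ α hα)
  have hba : b - a = n + R.ind α - R.ind (e α) := by rw [ha, hb, h1, h2]; ring
  have : ((b - a).toNat : ℚ) = max 0 ((b - a : ℤ) : ℚ) := by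
    rcases le_or_gt 0 (b - a) with h | h
    · rw [max_eq_right (show (0:ℚ) ≤ ((b - a : ℤ) : ℚ) by exact_mod_cast h)]
      exact_mod_cast Int.toNat_of_nonneg h
    · rw [max_eq_left (show ((b - a : ℤ) : ℚ) ≤ 0 by exact_mod_cast h.le)]
      simp [Int.toNat_of_nonpos h.le]
  rw [this, RS.lenF, hn, hba]
  push_cast
  ring_nf
end

section
/- Let x = wε^μ ∈ W̃ and v ∈ W. Then ℓ(x) ≥ ⟨v⁻¹μ, 2ρ⟩ − ℓ(v) + ℓ(wv), where 2ρ is the sum of positive roots, and equality holds if and only if v is length positive for x (i.e. ℓ(x,vα) ≥ 0 for all α ∈ Φ⁺). -/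
open scoped BigOperators
open Classical

variable {V : Type*} [AddCommGroup V] [Module ℚ V]

-- AUX

lemma RS.dichotomy (R : RS V) {β : V} (hβ : β ∈ R.Φ) : β ∈ R.pos ∨ β ∈ R.negs := by
  rcases (R.f_ne β hβ).lt_or_gt with h | h
  · exact Or.inr ⟨hβ, h⟩
  · exact Or.inl ⟨hβ, h⟩

lemma RS.not_both (R : RS V) {β : V} (h1 : β ∈ R.pos) (h2 : β ∈ R.negs) : False :=
  absurd (h1.2.trans h2.2) (lt_irrefl _)

lemma RS.ind_neg (R : RS V) {β : V} (hβ : β ∈ R.Φ) : (R.ind (-β) : ℚ) = 1 - (R.ind β : ℚ) := by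
  rcases R.dichotomy hβ with h | h
  · have h' : -β ∉ R.pos := fun hc => by
      have := hc.2
      simp [map_neg] at this
      exact absurd (this.trans h.2) (lt_irrefl _)
    simp [RS.ind, h, h']
  · have h' : -β ∈ R.pos := ⟨R.neg_mem β hβ, by simpa [map_neg] using h.2⟩
    have h'' : β ∉ R.pos := fun hc => R.not_both hc h
    simp [RS.ind, h', h'']

lemma RS.lenF_neg (R : RS V) (e : V ≃ₗ[ℚ] V) (μ : Module.Dual ℚ V) {β : V}
    (hβ : β ∈ R.Φ) (heβ : e β ∈ R.Φ) :
    R.lenF e μ (-β) = - R.lenF e μ β := by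
  unfold RS.lenF
  rw [map_neg, map_neg, R.ind_neg hβ, R.ind_neg heβ]
  ring


/-- `ℓ(x) ≥ ⟨v⁻¹μ, 2ρ⟩ - ℓ(v) + ℓ(wv)`, with equality iff `v` is length positive
for `x = w ε^μ`.  Here `ℓ(x) = Σ_{α ∈ Φ} max(0, ℓ(x, α))`. -/
theorem statement8 (R : RS V) {W : Type*} [Group W] (ρ : W →* (V ≃ₗ[ℚ] V))
    (hρΦ : ∀ u : W, ∀ α ∈ R.Φ, ρ u α ∈ R.Φ)
    (w v : W) (μ : Module.Dual ℚ V) :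
    μ (ρ v R.twoRho) - (wlen R ρ v : ℚ) + (wlen R ρ (w * v) : ℚ)
        ≤ ∑ α ∈ R.finite.toFinset, max 0 (R.lenF (ρ w) μ α) ∧
      ((∑ α ∈ R.finite.toFinset, max 0 (R.lenF (ρ w) μ α))
          = μ (ρ v R.twoRho) - (wlen R ρ v : ℚ) + (wlen R ρ (w * v) : ℚ)
        ↔ v ∈ LP R ρ w μ) := by
  classical
  set S := R.finite.toFinset with hSdef
  set P := R.posFinset with hPdef
  have hS : ∀ α, α ∈ S ↔ α ∈ R.Φ := fun α => R.finite.mem_toFinset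
  have hP : ∀ α, α ∈ P ↔ α ∈ R.pos := fun α => Set.Finite.mem_toFinset _
  have hPS : P ⊆ S := fun α hα => (hS α).2 ((hP α).1 hα).1
  have hmul : ∀ (u u' : W) (α : V), ρ (u * u') α = ρ u (ρ u' α) := by
    intro u u' α; rw [map_mul]; rfl
  -- t α := ℓ(x, vα)
  set t : V → ℚ := fun α => R.lenF (ρ w) μ (ρ v α) with htdef
  -- Step A : reindex by ρ v
  have himg : S.image (fun α => ρ v α) = S := by
    apply Finset.eq_of_subset_of_card_le
    · intro β hβ
      rcases Finset.mem_image.1 hβ with ⟨α, hα, rfl⟩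
      exact (hS _).2 (hρΦ v α ((hS α).1 hα))
    · rw [Finset.card_image_of_injective _ (ρ v).injective]
  have hreindex : ∑ α ∈ S, max 0 (R.lenF (ρ w) μ α) = ∑ α ∈ S, max 0 (t α) := by
    conv_lhs => rw [← himg]
    rw [Finset.sum_image (fun a _ b _ h => (ρ v).injective h)]
  -- Step B : split into positive and negative roots
  have hsplit : ∑ α ∈ S, max 0 (t α)
      = ∑ α ∈ S \ P, max 0 (t α) + ∑ α ∈ P, max 0 (t α) :=
    (Finset.sum_sdiff hPS).symm
  -- Step C : negatives are -positives
  have hnegimg : P.image (fun α => -α) = S \ P := by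
    ext β
    constructor
    · intro hβ
      rcases Finset.mem_image.1 hβ with ⟨α, hα, rfl⟩
      have hαpos := (hP α).1 hα
      refine Finset.mem_sdiff.2 ⟨(hS _).2 (R.neg_mem α hαpos.1), ?_⟩
      intro hc
      have h2 := ((hP _).1 hc).2
      rw [map_neg] at h2
      linarith [hαpos.2]
    · intro hβ
      rcases Finset.mem_sdiff.1 hβ with ⟨h1, h2⟩
      have hβΦ := (hS β).1 h1
      rcases R.dichotomy hβΦ with h | h
      · exact absurd ((hP β).2 h) h2
      · refine Finset.mem_image.2 ⟨-β, (hP _).2 ⟨R.neg_mem β hβΦ, by simpa [map_neg] using h.2⟩, by simp⟩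
  have hnegsum : ∑ α ∈ S \ P, max 0 (t α) = ∑ α ∈ P, max 0 (-(t α)) := by
    rw [← hnegimg, Finset.sum_image (fun a _ b _ h => neg_injective h)]
    apply Finset.sum_congr rfl
    intro α hα
    have hαΦ : α ∈ R.Φ := ((hP α).1 hα).1
    have h1 : ρ v α ∈ R.Φ := hρΦ v α hαΦ
    have h2 : ρ w (ρ v α) ∈ R.Φ := hρΦ w _ h1
    simp only [htdef, map_neg]
    rw [R.lenF_neg (ρ w) μ h1 h2]
  have htotal : ∑ α ∈ S, max 0 (R.lenF (ρ w) μ α)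
      = ∑ α ∈ P, (max 0 (t α) + max 0 (-(t α))) := by
    rw [hreindex, hsplit, hnegsum, ← Finset.sum_add_distrib]
    exact Finset.sum_congr rfl (fun α _ => add_comm _ _)
  -- Step E : the target equals ∑ t
  have hwlen : ∀ u : W, (wlen R ρ u : ℚ) = ((P.filter (fun α => ρ u α ∈ R.negs)).card : ℚ) := by
    intro u
    congr 1
    unfold wlen
    have : {α | α ∈ R.pos ∧ ρ u α ∈ R.negs} = ↑(P.filter (fun α => ρ u α ∈ R.negs)) := by
      ext α
      constructor
      · rintro ⟨h1, h2⟩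
        exact Finset.mem_coe.2 (Finset.mem_filter.2 ⟨(hP α).2 h1, h2⟩)
      · intro h
        have h3 := Finset.mem_filter.1 (Finset.mem_coe.1 h)
        exact ⟨(hP α).1 h3.1, h3.2⟩
    rw [this, Set.ncard_coe_finset]
  have hindsum : ∀ u : W, ∑ α ∈ P, ((R.ind (ρ u α) : ℚ))
      = (P.card : ℚ) - ((P.filter (fun α => ρ u α ∈ R.negs)).card : ℚ) := by
    intro u
    have hfilter : P.filter (fun α => ρ u α ∈ R.pos)
        = P.filter (fun α => ¬ (ρ u α ∈ R.negs)) := by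
      apply Finset.filter_congr
      intro α hα
      have hΦ : ρ u α ∈ R.Φ := hρΦ u α ((hP α).1 hα).1
      constructor
      · intro h1 h2; exact R.not_both h1 h2
      · intro h1; rcases R.dichotomy hΦ with h | h
        · exact h
        · exact absurd h h1
    have hcards : (P.filter (fun α => ¬ (ρ u α ∈ R.negs))).card
        + (P.filter (fun α => ρ u α ∈ R.negs)).card = P.card := by
      rw [add_comm]
      exact Finset.card_filter_add_card_filter_not _
    have : ∑ α ∈ P, ((R.ind (ρ u α) : ℚ)) = ((P.filter (fun α => ρ u α ∈ R.pos)).card : ℚ) := by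
      rw [Finset.card_filter]
      push_cast
      apply Finset.sum_congr rfl
      intro α _
      simp [RS.ind, apply_ite]
    rw [this, hfilter]
    have := congrArg (fun n : ℕ => (n : ℚ)) hcards
    push_cast at this ⊢
    linarith
  have hsum_t : ∑ α ∈ P, t α
      = μ (ρ v R.twoRho) - (wlen R ρ v : ℚ) + (wlen R ρ (w * v) : ℚ) := by
    have hμ : ∑ α ∈ P, μ (ρ v α) = μ (ρ v R.twoRho) := by
      rw [RS.twoRho, map_sum, map_sum]
    have hrw : ∀ α : V, R.ind (ρ w (ρ v α)) = R.ind (ρ (w * v) α) := by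
      intro α; rw [hmul]
    calc ∑ α ∈ P, t α
        = ∑ α ∈ P, (μ (ρ v α) + (R.ind (ρ v α) : ℚ) - (R.ind (ρ (w * v) α) : ℚ)) := by
          apply Finset.sum_congr rfl
          intro α _
          simp only [htdef, RS.lenF, hrw]
      _ = (∑ α ∈ P, μ (ρ v α)) + (∑ α ∈ P, ((R.ind (ρ v α) : ℚ)))
            - (∑ α ∈ P, ((R.ind (ρ (w * v) α) : ℚ))) := by
          rw [← Finset.sum_add_distrib, ← Finset.sum_sub_distrib]
      _ = _ := by
          rw [hμ, hindsum v, hindsum (w * v), hwlen v, hwlen (w * v)]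
          ring
  -- per-term facts
  have hterm_ge : ∀ α ∈ P, t α ≤ max 0 (t α) + max 0 (-(t α)) := by
    intro α _
    have h1 : t α ≤ max 0 (t α) := le_max_right _ _
    have h2 : (0 : ℚ) ≤ max 0 (-(t α)) := le_max_left _ _
    linarith
  have hterm_eq : ∀ α ∈ P, (max 0 (t α) + max 0 (-(t α)) = t α ↔ 0 ≤ t α) := by
    intro α _
    constructor
    · intro h
      by_contra hc
      push_neg at hc
      rw [max_eq_left hc.le, max_eq_right (by linarith : (0:ℚ) ≤ -(t α))] at h
      linarith
    · intro h
      rw [max_eq_right h, max_eq_left (by linarith : -(t α) ≤ 0)]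
      ring
  constructor
  · rw [htotal, ← hsum_t]
    exact Finset.sum_le_sum hterm_ge
  · rw [htotal, ← hsum_t]
    rw [eq_comm, Finset.sum_eq_sum_iff_of_le hterm_ge]
    constructor
    · intro h α hα
      exact ((hterm_eq α ((hP α).2 hα)).1 (h α ((hP α).2 hα)).symm)
    · intro h α hα
      exact ((hterm_eq α hα).2 (h α ((hP α).1 hα))).symm
end
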